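/- arXiv:2311.04487 — 4 statements merged into one kernel-verified Lean document; each statement's English description precedes it below -/
import Mathlib

section
/- Let k ≥ 1 and consider signed-weighted lattice paths in the double staircase partition ρ̃_{2k}. Then wt((2k,1),(1,2k)) = 0, wt((2k,2),(1,2k)) = C_{k−1}, wt((2k,1),(2,2k)) = −C_{k−1}, and wt((2k,2),(2,2k)) = C_{k−1}. -/
/-- `(i,j)` is a box of the Young diagram of `lam` (parts `lam 1, lam 2, …`, rows indexed
from the top, columns from the left): `1 ≤ i`, `1 ≤ j ≤ lam i`. -/
def inDiagram (lam : ℕ → ℕ) (p : ℕ × ℕ) : Prop :=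
  1 ≤ p.1 ∧ 1 ≤ p.2 ∧ p.2 ≤ lam p.1

/-- A step of a lattice path: up `(i,j) → (i-1,j)` or right `(i,j) → (i,j+1)`. -/
def isStep (p q : ℕ × ℕ) : Prop :=
  (p.1 = q.1 + 1 ∧ p.2 = q.2) ∨ (q.1 = p.1 ∧ q.2 = p.2 + 1)

/-- `P` is a lattice path in `lam` from box `a` to box `b`: a nonempty sequence of boxes of
`lam` starting at `a`, ending at `b`, each step going up or right. -/
def IsLatticePath (lam : ℕ → ℕ) (a b : ℕ × ℕ) (P : List (ℕ × ℕ)) : Prop :=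
  P ≠ [] ∧ P.head? = some a ∧ P.getLast? = some b ∧
    (∀ q ∈ P, inDiagram lam q) ∧ List.Chain' isStep P

/-- The signed weight of a path: the product of `(-1)^{i-1}` over all right steps taken from a
box in row `i` (up steps contribute `1`). -/
def pathWeight : List (ℕ × ℕ) → ℤ
  | [] => 1
  | [_] => 1
  | p :: q :: rest =>
      (if q.1 = p.1 then (-1 : ℤ) ^ (p.1 - 1) else 1) * pathWeight (q :: rest)

/-- `wt(a,b)`: the sum of the signed weights of all lattice paths in `lam` from `a` to `b`. -/
noncomputable def wtSum (lam : ℕ → ℕ) (a b : ℕ × ℕ) : ℤ :=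
  ∑ᶠ P ∈ {P : List (ℕ × ℕ) | IsLatticePath lam a b P}, pathWeight P

/-- The double staircase partition `ρ̃_n`: `(n,n,n-2,n-2,…,2,2)` for even `n` and
`(n,n,n-2,n-2,…,3,3,2)` for odd `n`, as a function sending a row index to its part. -/
def rhoTilde (n i : ℕ) : ℕ :=
  if 1 ≤ i ∧ i ≤ n then (if n % 2 = 1 ∧ i = n then 2 else n - 2 * ((i - 1) / 2)) else 0

/-!
`wt(·, b)` is the only function that vanishes off the diagram and satisfies the first-step
recursion `wt(a, b) = [a = b] + wt(a↑, b) + (-1)^(i-1) wt(a→, b)` for boxes `a` in row `i`.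
The diagram of `ρ̃_{2k}` is the staircase `δ_k` with every box blown up to a `2 × 2` block, and
since the two rows of a block carry opposite signs, the signed sums collapse to unsigned path
counts in `δ_k`: for `b = (1, 2k)` and `b = (2, 2k)` an explicit candidate built from the number of
block paths to the top corner of `δ_k` satisfies the recursion. From the bottom corner of `δ_k`
there are `C_{k-1}` such paths.
-/
instance (lam : ℕ → ℕ) (p : ℕ × ℕ) : Decidable (inDiagram lam p) :=
  inferInstanceAs (Decidable (_ ∧ _ ∧ _))

section LatticePaths

variable {lam : ℕ → ℕ}

theorem inDiagram_induction (lam : ℕ → ℕ) {motive : ℕ × ℕ → Prop}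
    (outside : ∀ a, ¬ inDiagram lam a → motive a)
    (inside : ∀ a, inDiagram lam a → motive (a.1 - 1, a.2) → motive (a.1, a.2 + 1) → motive a)
    (a : ℕ × ℕ) : motive a := by
  obtain ⟨i, j⟩ := a
  induction i using Nat.strong_induction_on generalizing j with
  | _ i ih_row =>
    obtain ⟨n, hn⟩ : ∃ n, lam i + 1 - j ≤ n := ⟨_, le_rfl⟩
    induction n generalizing j with
    | zero => exact outside _ fun h => by simp only [inDiagram] at h; omega
    | succ n ih_col =>
      by_cases h : inDiagram lam (i, j)
      · have hi : 1 ≤ i := h.1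
        have hj : j ≤ lam i := h.2.2
        exact inside _ h (ih_row _ (by simp only; omega) _) (ih_col _ (by simp only; omega))
      · exact outside _ h

def latticePaths (lam : ℕ → ℕ) (a b : ℕ × ℕ) : Set (List (ℕ × ℕ)) :=
  {P | IsLatticePath lam a b P}

theorem eq_of_isLatticePath_cons {a b p : ℕ × ℕ} {Q : List (ℕ × ℕ)}
    (h : IsLatticePath lam a b (p :: Q)) : p = a := by
  simpa using h.2.1

@[simp]
theorem not_isLatticePath_nil {a b : ℕ × ℕ} : ¬ IsLatticePath lam a b [] :=
  fun h => h.1 rfl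

theorem isStep_iff {a q : ℕ × ℕ} (ha : 1 ≤ a.1) :
    isStep a q ↔ q = (a.1 - 1, a.2) ∨ q = (a.1, a.2 + 1) := by
  obtain ⟨i, j⟩ := a; obtain ⟨i', j'⟩ := q
  simp only [isStep, Prod.mk.injEq] at ha ⊢
  omega

theorem isLatticePath_iff {a b : ℕ × ℕ} {P : List (ℕ × ℕ)} :
    IsLatticePath lam a b P ↔ P ≠ [] ∧ P.head? = some a ∧ P.getLast? = some b ∧
      (∀ q ∈ P, inDiagram lam q) ∧ P.IsChain isStep :=
  Iff.rfl

theorem isLatticePath_singleton_iff {a b p : ℕ × ℕ} :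
    IsLatticePath lam a b [p] ↔ p = a ∧ a = b ∧ inDiagram lam a := by
  simp only [isLatticePath_iff, List.head?_cons, List.getLast?_singleton, Option.some.injEq,
    List.mem_singleton, forall_eq, List.isChain_singleton, ne_eq, reduceCtorEq, not_false_eq_true,
    true_and, and_true]
  constructor <;> rintro ⟨rfl, rfl, h⟩ <;> exact ⟨rfl, rfl, h⟩

theorem isLatticePath_cons_cons_iff {a b p q : ℕ × ℕ} {Q : List (ℕ × ℕ)} :
    IsLatticePath lam a b (p :: q :: Q) ↔
      p = a ∧ inDiagram lam a ∧ isStep a q ∧ IsLatticePath lam q b (q :: Q) := by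
  simp only [isLatticePath_iff, List.head?_cons, List.getLast?_cons_cons, Option.some.injEq,
    List.mem_cons, forall_eq_or_imp, List.isChain_cons_cons, ne_eq, reduceCtorEq,
    not_false_eq_true, true_and]
  constructor
  · rintro ⟨rfl, hl, ⟨hp, hq, hQ⟩, hs, hc⟩; exact ⟨rfl, hp, hs, hl, ⟨hq, hQ⟩, hc⟩
  · rintro ⟨rfl, hp, hs, hl, ⟨hq, hQ⟩, hc⟩; exact ⟨rfl, hl, ⟨hp, hq, hQ⟩, hs, hc⟩

theorem latticePaths_of_not_inDiagram {a b : ℕ × ℕ} (h : ¬ inDiagram lam a) :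
    latticePaths lam a b = ∅ := by
  refine Set.eq_empty_of_forall_notMem fun P hP => ?_
  obtain _ | ⟨p, Q⟩ := P
  · exact hP.1 rfl
  · exact h (eq_of_isLatticePath_cons hP ▸ hP.2.2.2.1 p List.mem_cons_self)

theorem latticePaths_of_inDiagram {a b : ℕ × ℕ} (h : inDiagram lam a) :
    latticePaths lam a b = (if a = b then {[a]} else ∅) ∪
      (List.cons a '' latticePaths lam (a.1 - 1, a.2) b ∪
        List.cons a '' latticePaths lam (a.1, a.2 + 1) b) := by
  ext P
  rcases P with _ | ⟨p, _ | ⟨q, Q⟩⟩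
  · simp [latticePaths, isLatticePath_iff]
  · by_cases hab : a = b
    · subst hab; simp [latticePaths, isLatticePath_singleton_iff, h, eq_comm]
    · simp [latticePaths, isLatticePath_singleton_iff, hab]
  · have head_iff :
        ∀ c, IsLatticePath lam c b (q :: Q) ↔ q = c ∧ IsLatticePath lam q b (q :: Q) :=
      fun c => ⟨fun hc => ⟨eq_of_isLatticePath_cons hc, eq_of_isLatticePath_cons hc ▸ hc⟩,
        fun ⟨hq, hc⟩ => hq ▸ hc⟩
    have hnot : p :: q :: Q ∉ (if a = b then {[a]} else ∅ : Set (List (ℕ × ℕ))) := by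
      split_ifs <;> simp
    simp only [latticePaths, Set.mem_ofPred_eq, isLatticePath_cons_cons_iff, isStep_iff h.1,
      Set.mem_union, hnot, Set.mem_image, List.cons.injEq, exists_eq_right_right,
      head_iff (a.1 - 1, a.2), head_iff (a.1, a.2 + 1)]
    tauto

theorem latticePaths_finite (a b : ℕ × ℕ) : (latticePaths lam a b).Finite := by
  induction a using inDiagram_induction lam with
  | outside a h => simp [latticePaths_of_not_inDiagram h]
  | inside a h hup hright =>
    rw [latticePaths_of_inDiagram h]
    refine .union ?_ (.union (hup.image _) (hright.image _))
    split_ifs <;> simp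

theorem disjoint_latticePaths {c c' b : ℕ × ℕ} (h : c ≠ c') :
    Disjoint (latticePaths lam c b) (latticePaths lam c' b) := by
  refine Set.disjoint_left.2 fun P hP hP' => ?_
  obtain _ | ⟨p, Q⟩ := P
  · exact hP.1 rfl
  · exact h ((eq_of_isLatticePath_cons hP).symm.trans (eq_of_isLatticePath_cons hP'))

theorem pathWeight_cons {a b c : ℕ × ℕ} {Q : List (ℕ × ℕ)} (hQ : IsLatticePath lam c b Q) :
    pathWeight (a :: Q) = (if c.1 = a.1 then (-1 : ℤ) ^ (a.1 - 1) else 1) * pathWeight Q := by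
  obtain _ | ⟨q, Q⟩ := Q
  · exact absurd hQ not_isLatticePath_nil
  · obtain rfl := eq_of_isLatticePath_cons hQ
    rfl

theorem wtSum_eq_finsum (a b : ℕ × ℕ) :
    wtSum lam a b = ∑ᶠ P ∈ latticePaths lam a b, pathWeight P :=
  rfl

theorem wtSum_of_not_inDiagram {a b : ℕ × ℕ} (h : ¬ inDiagram lam a) : wtSum lam a b = 0 := by
  rw [wtSum_eq_finsum, latticePaths_of_not_inDiagram h, finsum_mem_empty]

theorem wtSum_of_inDiagram {a b : ℕ × ℕ} (h : inDiagram lam a) :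
    wtSum lam a b = (if a = b then 1 else 0) + wtSum lam (a.1 - 1, a.2) b +
      (-1) ^ (a.1 - 1) * wtSum lam (a.1, a.2 + 1) b := by
  have hup_ne : (a.1 - 1, a.2) ≠ (a.1, a.2 + 1) := by simp
  have hsingle : ∀ c, Disjoint (if a = b then {[a]} else ∅ : Set (List (ℕ × ℕ)))
      (List.cons a '' latticePaths lam c b) := by
    intro c
    split_ifs
    · simp [latticePaths]
    · exact Set.empty_disjoint _
  have hfin : ∀ c, (List.cons a '' latticePaths lam c b).Finite :=
    fun c => (latticePaths_finite c b).image _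
  have hfin₀ : (if a = b then {[a]} else ∅ : Set (List (ℕ × ℕ))).Finite := by
    split_ifs <;> simp
  simp only [wtSum_eq_finsum]
  rw [latticePaths_of_inDiagram h,
    finsum_mem_union ((hsingle _).union_right (hsingle _)) hfin₀ ((hfin _).union (hfin _)),
    finsum_mem_union ((Set.disjoint_image_iff List.cons_injective).2
      (disjoint_latticePaths hup_ne)) (hfin _) (hfin _),
    finsum_mem_image List.cons_injective.injOn, finsum_mem_image List.cons_injective.injOn,
    ← add_assoc, mul_finsum_mem]
  congr 1
  congr 1
  · split_ifs <;> simp [pathWeight]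
  · refine finsum_mem_congr rfl fun Q hQ => ?_
    rw [pathWeight_cons hQ, if_neg (by have := h.1; simp only; omega), one_mul]
  · exact finsum_mem_congr rfl fun Q hQ => by rw [pathWeight_cons hQ, if_pos rfl]

theorem wtSum_eq_of_recursion {b : ℕ × ℕ} (f : ℕ × ℕ → ℤ)
    (outside : ∀ a, ¬ inDiagram lam a → f a = 0)
    (inside : ∀ a, inDiagram lam a →
      f a = (if a = b then 1 else 0) + f (a.1 - 1, a.2) + (-1) ^ (a.1 - 1) * f (a.1, a.2 + 1))
    (a : ℕ × ℕ) : wtSum lam a b = f a := by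
  induction a using inDiagram_induction lam with
  | outside a h => rw [wtSum_of_not_inDiagram h, outside a h]
  | inside a h hup hright => rw [wtSum_of_inDiagram h, inside a h, hup, hright]

end LatticePaths

/-- The number of up/right paths in a staircase to its top corner from a cell `m` rows below the
top row and `u` cells before the end of its row. Splitting the paths at their first return to the
boundary gives the Catalan convolution below. -/
def ballot : ℕ → ℕ → ℕ
  | 0, _ => 1
  | m + 1, 0 => ballot m 1
  | m + 1, u + 1 => ballot (m + 1) u + ballot m (u + 2)

@[simp]
theorem ballot_zero (u : ℕ) : ballot 0 u = 1 := by
  rw [ballot]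

theorem ballot_succ_zero (m : ℕ) : ballot (m + 1) 0 = ballot m 1 := by
  rw [ballot]

theorem ballot_succ_succ (m u : ℕ) :
    ballot (m + 1) (u + 1) = ballot (m + 1) u + ballot m (u + 2) := by
  rw [ballot]

open Finset in
theorem ballot_zero_eq_catalan_and_succ_eq_sum (m : ℕ) : ballot m 0 = catalan m ∧
    ∀ u, ballot m (u + 1) = ∑ p ∈ antidiagonal m, catalan p.1 * ballot p.2 u := by
  induction m using Nat.strong_induction_on with
  | _ m ih =>
    obtain _ | m := m
    · simp [catalan_zero]
    have ih_sum := (ih m m.lt_succ_self).2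
    have peel : ∀ u, ∑ p ∈ antidiagonal (m + 1), catalan p.1 * ballot p.2 u =
        catalan (m + 1) + ∑ p ∈ antidiagonal m, catalan p.1 * ballot (p.2 + 1) u := by
      intro u
      rw [Nat.sum_antidiagonal_succ', ballot_zero, mul_one]
    have h_zero : ballot (m + 1) 0 = catalan (m + 1) := by
      rw [ballot_succ_zero, ih_sum, catalan_succ']
      refine sum_congr rfl fun p hp => ?_
      rw [(ih p.2 (Nat.antidiagonal.snd_lt hp)).1]
    refine ⟨h_zero, fun u => ?_⟩
    induction u with
    | zero =>
      rw [ballot_succ_succ, h_zero, peel, ih_sum 1]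
      simp only [ballot_succ_zero]
    | succ u ih_u =>
      rw [ballot_succ_succ, ih_u, ih_sum (u + 2), peel, peel, add_assoc, ← sum_add_distrib]
      simp only [ballot_succ_succ, mul_add]

theorem ballot_zero_eq_catalan (m : ℕ) : ballot m 0 = catalan m :=
  (ballot_zero_eq_catalan_and_succ_eq_sum m).1

theorem inDiagram_rhoTilde_iff (k i j : ℕ) :
    inDiagram (rhoTilde (2 * k)) (i, j) ↔ 1 ≤ i ∧ 1 ≤ j ∧ (i + 1) / 2 + (j + 1) / 2 ≤ k + 1 := by
  simp only [inDiagram, rhoTilde]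
  split_ifs <;> omega

/-- The number of block paths in `δ_k` from block `(r, c)`, which covers rows `2r-1, 2r` and
columns `2c-1, 2c` of `ρ̃_{2k}`, to the top corner `(1, k)`. -/
def stairCount (k r c : ℕ) : ℤ :=
  if 1 ≤ r ∧ 1 ≤ c ∧ r + c ≤ k + 1 then ballot (r - 1) (k + 1 - r - c) else 0

theorem stairCount_recursion {k r c : ℕ} (hr : 1 ≤ r) (hc : 1 ≤ c) (h : r + c ≤ k + 1) :
    stairCount k r c =
      (if r = 1 ∧ c = k then 1 else 0) + stairCount k (r - 1) c + stairCount k r (c + 1) := by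
  obtain ⟨m, rfl⟩ : ∃ m, r = m + 1 := ⟨r - 1, by omega⟩
  rcases m with _ | m
  · simp only [stairCount, zero_add, le_refl, Nat.sub_self, ballot_zero, true_and, hc]
    split_ifs <;> push_cast <;> omega
  · obtain ⟨u, hu⟩ : ∃ u, k + 1 - (m + 1 + 1) - c = u := ⟨_, rfl⟩
    simp only [stairCount, Nat.add_sub_cancel]
    rw [if_pos ⟨hr, hc, h⟩, hu, if_neg (by omega), zero_add,
      if_pos (by omega), show k + 1 - (m + 1) - c = u + 1 by omega]
    rcases u with _ | u
    · rw [if_neg (by omega), ballot_succ_zero]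
      push_cast; ring
    · rw [if_pos (by omega), show k + 1 - (m + 1 + 1) - (c + 1) = u by omega, ballot_succ_succ]
      push_cast; ring

theorem stairCount_corner {k : ℕ} (hk : 1 ≤ k) : stairCount k k 1 = catalan (k - 1) := by
  rw [stairCount, if_pos (by omega), show k + 1 - k - 1 = 0 by omega,
    ballot_zero_eq_catalan]

def wtToFirstRow (k : ℕ) (p : ℕ × ℕ) : ℤ :=
  if Even p.1 ∧ Odd p.2 then 0 else stairCount k ((p.1 + 1) / 2) ((p.2 + 1) / 2)

/-- In an odd row the value is read off the block above, which does not vanish just outside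
`ρ̃_{2k}`: hence the explicit guard. -/
def wtToSecondRow (k : ℕ) (p : ℕ × ℕ) : ℤ :=
  if Even p.1 then (-1) ^ p.2 * stairCount k ((p.1 + 1) / 2) ((p.2 + 1) / 2)
  else if Even p.2 ∧ inDiagram (rhoTilde (2 * k)) p then stairCount k (p.1 / 2) ((p.2 + 1) / 2)
  else 0

theorem exists_eq_two_mul_add_one_or_two {n : ℕ} (hn : 1 ≤ n) :
    ∃ m, n = 2 * m + 1 ∨ n = 2 * m + 2 :=
  ⟨(n - 1) / 2, by omega⟩

theorem wtSum_rhoTilde_firstRow (k : ℕ) (a : ℕ × ℕ) :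
    wtSum (rhoTilde (2 * k)) a (1, 2 * k) = wtToFirstRow k a := by
  refine wtSum_eq_of_recursion _ (fun ⟨i, j⟩ h => ?_) (fun ⟨i, j⟩ h => ?_) a
  · rw [inDiagram_rhoTilde_iff] at h
    simp only [wtToFirstRow, stairCount]
    split_ifs <;> first | rfl | omega
  · rw [inDiagram_rhoTilde_iff] at h
    obtain ⟨m, rfl | rfl⟩ := exists_eq_two_mul_add_one_or_two h.1 <;>
    obtain ⟨s, rfl | rfl⟩ := exists_eq_two_mul_add_one_or_two h.2.1 <;>
    simp [wtToFirstRow, Nat.mul_add_div, parity_simps, add_assoc, Nat.odd_iff] at h ⊢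
    · omega
    · rw [stairCount_recursion (by omega) (by omega) (by omega)]
      simp [show 2 * s + 2 = 2 * k ↔ s + 1 = k by omega, add_assoc]

theorem wtSum_rhoTilde_secondRow (k : ℕ) (a : ℕ × ℕ) :
    wtSum (rhoTilde (2 * k)) a (2, 2 * k) = wtToSecondRow k a := by
  refine wtSum_eq_of_recursion _ (fun ⟨i, j⟩ h => ?_) (fun ⟨i, j⟩ h => ?_) a
  · have hbox := (inDiagram_rhoTilde_iff k i j).not.1 h
    simp only [wtToSecondRow, stairCount, h, and_false, ↓reduceIte]
    split_ifs <;> first | rfl | omega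
  · rw [inDiagram_rhoTilde_iff] at h
    obtain ⟨m, rfl | rfl⟩ := exists_eq_two_mul_add_one_or_two h.1 <;>
    obtain ⟨s, rfl | rfl⟩ := exists_eq_two_mul_add_one_or_two h.2.1 <;>
    simp [wtToSecondRow, inDiagram_rhoTilde_iff, Nat.mul_add_div, parity_simps, add_assoc,
      Nat.odd_iff] at h ⊢
    · rw [if_pos h]; ring
    · omega
    · omega
    · rw [if_pos h, stairCount_recursion (by omega) (by omega) (by omega)]
      simp [show 2 * s + 2 = 2 * k ↔ s + 1 = k by omega, add_assoc]

/-- In the double staircase partition `ρ̃_{2k}` (for `k ≥ 1`), the signed-weighted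
lattice path sums satisfy `wt((2k,1),(1,2k)) = 0`, `wt((2k,2),(1,2k)) = C_{k-1}`,
`wt((2k,1),(2,2k)) = -C_{k-1}` and `wt((2k,2),(2,2k)) = C_{k-1}`. -/
theorem stmt7 (k : ℕ) (hk : 1 ≤ k) :
    wtSum (rhoTilde (2 * k)) (2 * k, 1) (1, 2 * k) = 0 ∧
    wtSum (rhoTilde (2 * k)) (2 * k, 2) (1, 2 * k) = (catalan (k - 1) : ℤ) ∧
    wtSum (rhoTilde (2 * k)) (2 * k, 1) (2, 2 * k) = -(catalan (k - 1) : ℤ) ∧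
    wtSum (rhoTilde (2 * k)) (2 * k, 2) (2, 2 * k) = (catalan (k - 1) : ℤ) := by
  have hrow : (2 * k + 1) / 2 = k := by omega
  simp [wtSum_rhoTilde_firstRow, wtSum_rhoTilde_secondRow, wtToFirstRow, wtToSecondRow, hrow,
    stairCount_corner hk]
end

section
/- Let λ be a partition and let (a,b) and (i,j) be boxes of λ such that (i−2,j) and (i,j+2) are also boxes of λ, a ≤ i, b ≥ j, and (i−a) + (b−j) ≥ 2. If wt((i−2,j),(a,b)) = 0 and wt((i,j+2),(a,b)) = 0, then wt((i,j),(a,b)) = 0. -/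
/-!
Expanding a path by its first step gives, for a box `(x+1, y) ≠ q`, the recursion
`wt((x+1,y),q) = wt((x,y),q) + (-1)^x wt((x+1,y+1),q)`. Applying it at `(i,j)`, `(i-1,j)` and
`(i,j+1)` writes `wt((i,j),q)` as `wt((i-2,j),q) + wt((i,j+2),q)` plus two copies of
`wt((i-1,j+1),q)` carrying the opposite signs `(-1)^(i-2)` and `(-1)^(i-1)`, which cancel.
-/

lemma List.finite_setOf_nodup_forall_mem {α : Type*} {S : Set α} (hS : S.Finite) :
    {l : List α | l.Nodup ∧ ∀ x ∈ l, x ∈ S}.Finite := by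
  classical
  refine (hS.toFinset.powerset.finite_toSet.biUnion
    fun t _ => (Multiset.lists t.val).finite_toSet).subset ?_
  rintro l ⟨hnd, hl⟩
  simp only [Set.mem_iUnion]
  refine ⟨l.toFinset, Finset.mem_coe.mpr <| Finset.mem_powerset.mpr fun x hx => ?_, ?_⟩
  · simpa using hl x (List.mem_toFinset.mp hx)
  simp [List.toFinset_val, hnd.dedup]

def StrictlyNorthEast (p q : ℕ × ℕ) : Prop :=
  q.1 ≤ p.1 ∧ p.2 ≤ q.2 ∧ p ≠ q

instance : Trans StrictlyNorthEast StrictlyNorthEast StrictlyNorthEast where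
  trans := by
    rintro ⟨p1, p2⟩ ⟨q1, q2⟩ ⟨r1, r2⟩ ⟨h1, h2, hpq⟩ ⟨h3, h4, hqr⟩
    refine ⟨le_trans h3 h1, le_trans h2 h4, ?_⟩
    simp only [ne_eq, Prod.mk.injEq] at *
    omega

lemma isStep.strictlyNorthEast {p q : ℕ × ℕ} (h : isStep p q) : StrictlyNorthEast p q := by
  obtain ⟨p1, p2⟩ := p
  obtain ⟨q1, q2⟩ := q
  simp only [isStep, StrictlyNorthEast, ne_eq, Prod.mk.injEq] at *
  omega

lemma isStep_succ_iff {x y : ℕ} {s : ℕ × ℕ} :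
    isStep (x + 1, y) s ↔ s = (x, y) ∨ s = (x + 1, y + 1) := by
  obtain ⟨s1, s2⟩ := s
  simp only [isStep, Prod.mk.injEq]
  omega

namespace IsLatticePath

variable {lam : ℕ → ℕ} {a b : ℕ × ℕ} {P : List (ℕ × ℕ)}

lemma pairwise_strictlyNorthEast (h : IsLatticePath lam a b P) :
    P.Pairwise StrictlyNorthEast :=
  (h.2.2.2.2.imp fun _ _ => isStep.strictlyNorthEast).pairwise

lemma exists_eq_cons (h : IsLatticePath lam a b P) : ∃ P', P = a :: P' := by
  obtain ⟨hne, hhead, -⟩ := h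
  obtain ⟨y, P', rfl⟩ := List.exists_cons_of_ne_nil hne
  exact ⟨P', by simpa using hhead⟩

lemma fst_le (h : IsLatticePath lam a b P) {x : ℕ × ℕ} (hx : x ∈ P) : x.1 ≤ a.1 := by
  obtain ⟨P', rfl⟩ := h.exists_eq_cons
  rcases List.mem_cons.mp hx with rfl | hx
  · exact le_rfl
  · exact (List.rel_of_pairwise_cons h.pairwise_strictlyNorthEast hx).1

lemma pathWeight_cons (h : IsLatticePath lam a b P) (p : ℕ × ℕ) :
    pathWeight (p :: P) = (if a.1 = p.1 then (-1) ^ (p.1 - 1) else 1) * pathWeight P := by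
  obtain ⟨P', rfl⟩ := h.exists_eq_cons
  rfl

end IsLatticePath

lemma finite_setOf_isLatticePath (lam : ℕ → ℕ) (a b : ℕ × ℕ) :
    {P | IsLatticePath lam a b P}.Finite := by
  have hS : {x : ℕ × ℕ | x.1 ≤ a.1 ∧ x.2 ≤ lam x.1}.Finite := by
    refine ((Set.finite_Iic a.1).biUnion
      fun r _ => (Set.finite_singleton r).prod (Set.finite_Iic (lam r))).subset ?_
    rintro ⟨r, c⟩ ⟨hr, hc⟩
    simp_all
  refine (List.finite_setOf_nodup_forall_mem hS).subset fun P hP => ⟨?_, fun x hx => ?_⟩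
  · exact hP.pairwise_strictlyNorthEast.imp fun h => h.2.2
  · exact ⟨hP.fst_le hx, (hP.2.2.2.1 x hx).2.2⟩

lemma isLatticePath_cons_iff {lam : ℕ → ℕ} {p q : ℕ × ℕ} (hp : inDiagram lam p) (hne : p ≠ q)
    {P : List (ℕ × ℕ)} :
    IsLatticePath lam p q (p :: P) ↔ ∃ s, isStep p s ∧ IsLatticePath lam s q P := by
  constructor
  · rintro ⟨-, -, hlast, hmem, hchain⟩
    cases P with
    | nil => exact absurd (by simpa using hlast) hne
    | cons s P =>
      exact ⟨s, (List.isChain_cons_cons.mp hchain).1, List.cons_ne_nil _ _, rfl,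
        by simpa using hlast, fun r hr => hmem r (List.mem_cons_of_mem _ hr), hchain.tail⟩
  · rintro ⟨s, hs, hP⟩
    obtain ⟨P', rfl⟩ := hP.exists_eq_cons
    obtain ⟨-, -, hlast, hmem, hchain⟩ := hP
    exact ⟨List.cons_ne_nil _ _, rfl, by simpa using hlast, List.forall_mem_cons.mpr ⟨hp, hmem⟩,
      List.isChain_cons_cons.mpr ⟨hs, hchain⟩⟩

lemma setOf_isLatticePath_eq_image_cons {lam : ℕ → ℕ} {x y : ℕ} {q : ℕ × ℕ}
    (hp : inDiagram lam (x + 1, y)) (hne : (x + 1, y) ≠ q) :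
    {P | IsLatticePath lam (x + 1, y) q P} = List.cons (x + 1, y) ''
      ({P | IsLatticePath lam (x, y) q P} ∪ {P | IsLatticePath lam (x + 1, y + 1) q P}) := by
  ext P
  constructor
  · intro hP
    obtain ⟨P', rfl⟩ := hP.exists_eq_cons
    obtain ⟨s, hs, hP'⟩ := (isLatticePath_cons_iff hp hne).mp hP
    rcases isStep_succ_iff.mp hs with rfl | rfl
    exacts [⟨P', Or.inl hP', rfl⟩, ⟨P', Or.inr hP', rfl⟩]
  · rintro ⟨P', hP', rfl⟩
    refine (isLatticePath_cons_iff hp hne).mpr ?_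
    rcases hP' with hP' | hP'
    exacts [⟨_, isStep_succ_iff.mpr (Or.inl rfl), hP'⟩, ⟨_, isStep_succ_iff.mpr (Or.inr rfl), hP'⟩]

theorem wtSum_succ_eq {lam : ℕ → ℕ} {x y : ℕ} {q : ℕ × ℕ}
    (hp : inDiagram lam (x + 1, y)) (hne : (x + 1, y) ≠ q) :
    wtSum lam (x + 1, y) q = wtSum lam (x, y) q + (-1) ^ x * wtSum lam (x + 1, y + 1) q := by
  have hdisj : Disjoint {P | IsLatticePath lam (x, y) q P}
      {P | IsLatticePath lam (x + 1, y + 1) q P} :=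
    Set.disjoint_left.mpr fun P h₁ h₂ => by simpa using h₁.2.1.symm.trans h₂.2.1
  rw [wtSum, setOf_isLatticePath_eq_image_cons hp hne, finsum_mem_image List.cons_injective.injOn,
    finsum_mem_union hdisj (finite_setOf_isLatticePath ..) (finite_setOf_isLatticePath ..),
    wtSum, wtSum, mul_finsum_mem]
  congr 1 <;> refine finsum_mem_congr rfl fun P hP => ?_ <;> simp [hP.pathWeight_cons]

theorem stmt9_general (lam : ℕ → ℕ) (hlam : ∀ i j : ℕ, 1 ≤ i → i ≤ j → lam j ≤ lam i)
    (a b i j : ℕ) (hij : inDiagram lam (i, j))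
    (h1 : inDiagram lam (i - 2, j)) (h2 : inDiagram lam (i, j + 2))
    (hdist : 2 ≤ (i - a) + (b - j))
    (hw1 : wtSum lam (i - 2, j) (a, b) = 0) (hw2 : wtSum lam (i, j + 2) (a, b) = 0) :
    wtSum lam (i, j) (a, b) = 0 := by
  obtain ⟨k, rfl⟩ : ∃ k, i = k + 2 := ⟨i - 2, by have : 1 ≤ i - 2 := h1.1; omega⟩
  simp only [Nat.add_sub_cancel] at hw1
  have hk1 : inDiagram lam (k + 1, j) :=
    ⟨by omega, hij.2.1, hij.2.2.trans (hlam _ _ (by omega) (by omega))⟩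
  have hk2 : inDiagram lam (k + 2, j + 1) :=
    ⟨hij.1, by omega, by have := h2.2.2; dsimp at this ⊢; omega⟩
  rw [wtSum_succ_eq hij (by simp only [ne_eq, Prod.mk.injEq]; omega),
    wtSum_succ_eq hk1 (by simp only [ne_eq, Prod.mk.injEq]; omega),
    wtSum_succ_eq hk2 (by simp only [ne_eq, Prod.mk.injEq]; omega), hw1, hw2, pow_succ]
  ring

/-- In a partition `λ`, if `(a,b)` and `(i,j)` are boxes such that `(i-2,j)` and
`(i,j+2)` are also boxes, `a ≤ i`, `j ≤ b`, `(i-a) + (b-j) ≥ 2`, and both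
`wt((i-2,j),(a,b)) = 0` and `wt((i,j+2),(a,b)) = 0`, then `wt((i,j),(a,b)) = 0`. -/
theorem stmt9 (lam : ℕ → ℕ) (hlam : ∀ i j : ℕ, 1 ≤ i → i ≤ j → lam j ≤ lam i)
    (a b i j : ℕ) (hab : inDiagram lam (a, b)) (hij : inDiagram lam (i, j))
    (h1 : inDiagram lam (i - 2, j)) (h2 : inDiagram lam (i, j + 2))
    (hai : a ≤ i) (hjb : j ≤ b) (hdist : 2 ≤ (i - a) + (b - j))
    (hw1 : wtSum lam (i - 2, j) (a, b) = 0) (hw2 : wtSum lam (i, j + 2) (a, b) = 0) :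
    wtSum lam (i, j) (a, b) = 0 :=
  stmt9_general lam hlam a b i j hij h1 h2 hdist hw1 hw2
end

section
/- Let m ≥ 1, let M and M′ be m×m integer matrices, and let c_1,…,c_m be arbitrary integers. Define the 2m×2m integer matrix Ã by: Ã_{1,2j−1} = M′_{1,j} and Ã_{1,2j} = c_j for 1 ≤ j ≤ m; Ã_{2i−1,2j−1} = M′_{i,j} and Ã_{2i−1,2j} = M_{i−1,j} − M_{m,j} for 2 ≤ i ≤ m and 1 ≤ j ≤ m; and Ã_{2i,2j−1} = M′_{i+1,j} (with the convention M′_{m+1,j} = 0) and Ã_{2i,2j} = −M_{m,j} for 1 ≤ i ≤ m and 1 ≤ j ≤ m. Then |det(Ã)| = |det(M)| · |det(M′)|. -/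
/-!
Ordering rows and columns by parity turns `Ã` into the block matrix `[M', Q; N * M', N * Q - M]`,
where `Q = (Ã_{2i-1,2j})` and `N` is the nilpotent shift sending row `i + 1` to row `i`: the
`i`-th row of `N * Q - M` is `(M_i - M_m) - M_i = -M_m` for `i < m`, and `-M_m` for `i = m`.
Subtracting `N` times the top block row from the bottom one leaves the block triangular matrix
`[M', Q; 0, -M]`, so `det Ã = (-1)^m det M' det M`.
-/

open Matrix

def Fin.interleave (m : ℕ) : Fin m ⊕ Fin m ≃ Fin (2 * m) :=
  (Equiv.boolProdEquivSum (Fin m)).symm.trans <|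
    (finTwoEquiv.symm.prodCongr (Equiv.refl _)).trans <|
      (Equiv.prodComm _ _).trans <| finProdFinEquiv.trans <| finCongr (Nat.mul_comm m 2)

@[simp] lemma Fin.interleave_inl {m : ℕ} (i : Fin m) :
    Fin.interleave m (.inl i) = ⟨2 * i, by omega⟩ := by
  ext; simp [Fin.interleave, Equiv.boolProdEquivSum, finTwoEquiv]

@[simp] lemma Fin.interleave_inr {m : ℕ} (i : Fin m) :
    Fin.interleave m (.inr i) = ⟨2 * i + 1, by omega⟩ := by
  ext; simp [Fin.interleave, Equiv.boolProdEquivSum, finTwoEquiv]; omega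

variable {R : Type*} [CommRing R]

theorem Matrix.det_fromBlocks_mul_mul_add {m n : Type*} [Fintype m] [DecidableEq m]
    [Fintype n] [DecidableEq n]
    (P : Matrix m m R) (Q : Matrix m n R) (N : Matrix n m R) (T : Matrix n n R) :
    (fromBlocks P Q (N * P) (N * Q + T)).det = P.det * T.det := by
  have hfactor : fromBlocks P Q (N * P) (N * Q + T) = fromBlocks 1 0 N 1 * fromBlocks P Q 0 T := by
    simp [fromBlocks_multiply]
  rw [hfactor, det_mul, det_fromBlocks_zero₁₂, det_fromBlocks_zero₂₁]
  simp

def Matrix.shiftUp (m : ℕ) : Matrix (Fin m) (Fin m) R :=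
  of fun i k => if (k : ℕ) = i + 1 then 1 else 0

lemma Matrix.shiftUp_mul_apply {m : ℕ} {n : Type*} [Fintype n] (X : Matrix (Fin m) n R)
    (i : Fin m) (j : n) :
    ((shiftUp m : Matrix (Fin m) (Fin m) R) * X) i j =
      if h : (i : ℕ) + 1 < m then X ⟨i + 1, h⟩ j else 0 := by
  simp only [mul_apply, shiftUp, of_apply, ite_mul, one_mul, zero_mul]
  split_ifs with h
  · rw [Finset.sum_eq_single ⟨i + 1, h⟩] <;> simp +contextual [Fin.ext_iff]
  · exact Finset.sum_eq_zero fun k _ => if_neg (by omega)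

/-- Let `m ≥ 1`, `M, M′` be `m × m` integer matrices and `c_1,…,c_m` integers.
Define the `2m × 2m` integer matrix `Ã` (1-indexed) by `Ã_{1,2j-1} = M′_{1,j}`,
`Ã_{1,2j} = c_j`; `Ã_{2i-1,2j-1} = M′_{i,j}` and `Ã_{2i-1,2j} = M_{i-1,j} - M_{m,j}` for
`2 ≤ i ≤ m`; `Ã_{2i,2j-1} = M′_{i+1,j}` (with `M′_{m+1,j} = 0`) and `Ã_{2i,2j} = -M_{m,j}`
for `1 ≤ i ≤ m`. Then `|det Ã| = |det M| · |det M′|`.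
(Below everything is 0-indexed: 1-indexed row `2i-1` is row `2(i-1)`, row `2i` is
row `2(i-1)+1`.) -/
theorem stmt13 (m : ℕ) (hm : 1 ≤ m)
    (M M' : Matrix (Fin m) (Fin m) ℤ) (c : Fin m → ℤ)
    (A : Matrix (Fin (2 * m)) (Fin (2 * m)) ℤ)
    (hrow1 : ∀ j : Fin m,
      A ⟨0, by omega⟩ ⟨2 * (j : ℕ), by have := j.isLt; omega⟩ = M' ⟨0, by omega⟩ j ∧
      A ⟨0, by omega⟩ ⟨2 * (j : ℕ) + 1, by have := j.isLt; omega⟩ = c j)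
    (hodd : ∀ i j : Fin m, 1 ≤ (i : ℕ) →
      A ⟨2 * (i : ℕ), by have := i.isLt; omega⟩
        ⟨2 * (j : ℕ), by have := j.isLt; omega⟩ = M' i j ∧
      A ⟨2 * (i : ℕ), by have := i.isLt; omega⟩
        ⟨2 * (j : ℕ) + 1, by have := j.isLt; omega⟩ =
          M ⟨(i : ℕ) - 1, by have := i.isLt; omega⟩ j - M ⟨m - 1, by omega⟩ j)
    (heven : ∀ i j : Fin m,
      A ⟨2 * (i : ℕ) + 1, by have := i.isLt; omega⟩
        ⟨2 * (j : ℕ), by have := j.isLt; omega⟩ =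
          (if h : (i : ℕ) + 1 < m then M' ⟨(i : ℕ) + 1, h⟩ j else 0) ∧
      A ⟨2 * (i : ℕ) + 1, by have := i.isLt; omega⟩
        ⟨2 * (j : ℕ) + 1, by have := j.isLt; omega⟩ = -M ⟨m - 1, by omega⟩ j) :
    |A.det| = |M.det| * |M'.det| := by
  set e := Fin.interleave m
  set Q : Matrix (Fin m) (Fin m) ℤ := of fun i j => A (e (.inl i)) (e (.inr j))
  have hblocks : A.submatrix e e =
      fromBlocks M' Q (shiftUp m * M') (shiftUp m * Q + -M) := by
    ext (i | i) (j | j)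
    · obtain hi | hi := Nat.eq_zero_or_pos i
      · rw [show i = ⟨0, by omega⟩ from Fin.ext hi]
        simpa [e] using (hrow1 j).1
      · simpa [e] using (hodd i j hi).1
    · rfl
    · simpa [e, shiftUp_mul_apply] using (heven i j).1
    · simp only [submatrix_apply, fromBlocks_apply₂₂, Matrix.add_apply, Matrix.neg_apply,
        shiftUp_mul_apply]
      split_ifs with h
      · have hnext := (hodd ⟨i + 1, h⟩ j (by simp)).2
        simp only [Nat.add_sub_cancel, Fin.eta] at hnext
        simp only [e, Q, of_apply, Fin.interleave_inl, Fin.interleave_inr, hnext, (heven i j).2]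
        ring
      · rw [show i = ⟨m - 1, by omega⟩ from Fin.ext (show (i : ℕ) = m - 1 by omega)]
        simpa [e] using (heven ⟨m - 1, by omega⟩ j).2
  rw [← det_submatrix_equiv_self e, hblocks, det_fromBlocks_mul_mul_add, det_neg]
  simp [abs_mul, mul_comm]
end

section
/- For every n ≥ 2, the Schubert polynomial of the one-layer doubly layered permutation w̃_0(n) ∈ S_n is the monomial 𝔖_{w̃_0(n)} = ∏_{t ≥ 1, 2t ≤ n} (x_{2t−1} x_{2t})^{n−2t}; consequently Φ_{w̃_0(n)} = 1. -/
open MvPolynomial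

/-- The 0-indexed function underlying the permutation `w^k_0(n)`:
blocks of `k` consecutive increasing values in decreasing block order,
followed by a final increasing block `(1, …, r)` where `r = n % k`. -/
def wk0fun (k n j : ℕ) : ℕ :=
  if j < k * (n / k) then n - k * (j / k + 1) + j % k else j % k

/-- Assemble a direct product of `w^k_0` layers, given the list of layer sizes
(0-indexed function on positions). -/
def assemble (k : ℕ) : List ℕ → ℕ → ℕ
  | [], j => j
  | a :: L, j => if j < a then wk0fun k a j else a + assemble k L (j - a)

/-- The 0-indexed function underlying `1^m × w^k_0(q)` (a permutation of `m + q` letters). -/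
def idCrossW0 (k m q j : ℕ) : ℕ :=
  if j < m then j else m + wk0fun k q (j - m)

/-- The defining characterization of the family of Schubert polynomials
`𝔖_w ∈ ℤ[x_1,…,x_N]`, `w ∈ S_N`: for the longest element `w₀` (given 0-indexed by
`i ↦ N - 1 - i`, i.e. `Fin.revPerm`) one has `𝔖_{w₀} = x_1^{N-1} x_2^{N-2} ⋯ x_{N-1}`,
and whenever `w(i) > w(i+1)`, `𝔖_{w sᵢ} = ∂ᵢ 𝔖_w`, where `∂ᵢ f = (f - sᵢ f)/(xᵢ - xᵢ₊₁)`. -/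
def IsSchubertFamily {N : ℕ} (S : Equiv.Perm (Fin N) → MvPolynomial (Fin N) ℤ) : Prop :=
  S Fin.revPerm = ∏ i : Fin N, X i ^ (N - 1 - (i : ℕ)) ∧
  ∀ (w : Equiv.Perm (Fin N)) (i : ℕ) (hi : i + 1 < N),
    w ⟨i, Nat.lt_of_succ_lt hi⟩ > w ⟨i + 1, hi⟩ →
      (X (⟨i, Nat.lt_of_succ_lt hi⟩ : Fin N) - X ⟨i + 1, hi⟩) *
          S (w * Equiv.swap ⟨i, Nat.lt_of_succ_lt hi⟩ ⟨i + 1, hi⟩) =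
        S w - rename (Equiv.swap (⟨i, Nat.lt_of_succ_lt hi⟩ : Fin N) ⟨i + 1, hi⟩) (S w)

/-- `Υ f = f(1,1,…,1)`. -/
noncomputable def Upsilon {N : ℕ} (f : MvPolynomial (Fin N) ℤ) : ℤ :=
  eval (fun _ => (1 : ℤ)) f

/-- `Φ f = |f(1,-1,1,-1,…)|`, i.e. the absolute value of the evaluation at `x_i = (-1)^{i-1}`. -/
noncomputable def Phi {N : ℕ} (f : MvPolynomial (Fin N) ℤ) : ℤ :=
  |eval (fun i : Fin N => (-1 : ℤ) ^ (i : ℕ)) f|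

/-- `Φ^ζ f = |f(1,ζ,ζ²,…)|`, the complex absolute value of the evaluation at `x_i = ζ^{i-1}`. -/
noncomputable def PhiZeta {N : ℕ} (ζ : ℂ) (f : MvPolynomial (Fin N) ℤ) : ℝ :=
  ‖eval₂ (Int.castRingHom ℂ) (fun i : Fin N => ζ ^ (i : ℕ)) f‖

/-- `w ∈ S_n` is a `k`-multi-layered permutation: `w = w^k_0(kb_1) × ⋯ × w^k_0(kb_{t-1}) ×
w^k_0(kb_t + r)` for some positive integers `b_1, …, b_t` and `0 ≤ r < k` with
`n = kb_1 + ⋯ + kb_t + r`.  For `k = 1` these are the layered permutations and for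
`k = 2` the doubly layered permutations. -/
def IsMultiLayered (k : ℕ) {n : ℕ} (w : Equiv.Perm (Fin n)) : Prop :=
  ∃ (t : ℕ) (b : Fin t → ℕ) (r : ℕ), 0 < t ∧ (∀ i, 0 < b i) ∧ r < k ∧
    k * (∑ i, b i) + r = n ∧
    ∀ j : Fin n, (w j : ℕ) =
      assemble k (List.ofFn fun i : Fin t => k * b i + if (i : ℕ) = t - 1 then r else 0) j


/-- Auxiliary permutation chain: start with `w₀` and successively swap positions
`(2t, 2t+1)` (0-indexed). -/
def sigmaP (n : ℕ) : ℕ → Equiv.Perm (Fin n)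
  | 0 => Fin.revPerm
  | t+1 => if h : 2*t+1 < n then
      sigmaP n t * Equiv.swap ⟨2*t, Nat.lt_of_succ_lt h⟩ ⟨2*t+1, h⟩
    else sigmaP n t

lemma sigmaP_apply (n : ℕ) : ∀ (t : ℕ), 2*t ≤ n → ∀ j : Fin n,
    (sigmaP n t j : ℕ) =
      if (j:ℕ) < 2*t then (if (j:ℕ) % 2 = 0 then n-2-(j:ℕ) else n-(j:ℕ)) else n-1-(j:ℕ)
  | 0, ht, j => by
    simp only [sigmaP, Fin.revPerm_apply, Fin.val_rev]
    have := j.isLt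
    split_ifs <;> omega
  | t+1, ht, j => by
    have h : 2*t+1 < n := by omega
    have hj := j.isLt
    simp only [sigmaP, dif_pos h, Equiv.Perm.mul_apply]
    rcases eq_or_ne (j:ℕ) (2*t) with h1 | h1
    · have hje : j = ⟨2*t, Nat.lt_of_succ_lt h⟩ := Fin.ext h1
      subst hje
      rw [Equiv.swap_apply_left, sigmaP_apply n t (by omega)]
      simp only
      split_ifs <;> omega
    · rcases eq_or_ne (j:ℕ) (2*t+1) with h2 | h2
      · have hje : j = ⟨2*t+1, h⟩ := Fin.ext h2
        subst hje
        rw [Equiv.swap_apply_right, sigmaP_apply n t (by omega)]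
        simp only
        split_ifs <;> omega
      · rw [Equiv.swap_apply_of_ne_of_ne (Fin.ne_of_val_ne h1) (Fin.ne_of_val_ne h2),
          sigmaP_apply n t (by omega)]
        split_ifs <;> omega

/-- Index into `Fin n` by reducing mod `n`. -/
def idxF {n : ℕ} (h : 0 < n) (m : ℕ) : Fin n := ⟨m % n, Nat.mod_lt _ h⟩

lemma idxF_eq {n : ℕ} (h : 0 < n) {m : ℕ} (hm : m < n) (p : m < n) :
    idxF h m = ⟨m, p⟩ := Fin.ext (Nat.mod_eq_of_lt hm)

/-- The "done" part of the monomial. -/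
noncomputable def Ft {n : ℕ} (h : 0 < n) (t : ℕ) : MvPolynomial (Fin n) ℤ :=
  ∏ s ∈ Finset.range t, (X (idxF h (2*s)) * X (idxF h (2*s+1)))^(n-2*s-2)

/-- The "staircase tail" part of the monomial. -/
noncomputable def Gt (n t : ℕ) : MvPolynomial (Fin n) ℤ :=
  ∏ k ∈ Finset.univ.filter (fun k : Fin n => 2*t ≤ (k:ℕ)), X k ^ (n-1-(k:ℕ))

lemma X_sub_X_ne_zero {n : ℕ} {i j : Fin n} (h : i ≠ j) :
    (X i - X j : MvPolynomial (Fin n) ℤ) ≠ 0 := by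
  intro he
  have := congrArg (eval (fun k => if k = i then (1:ℤ) else 0)) he
  simp [Ne.symm h] at this

lemma schubert_M (n : ℕ) (hn : 2 ≤ n) (S : Equiv.Perm (Fin n) → MvPolynomial (Fin n) ℤ)
    (hS : IsSchubertFamily S) : ∀ t, 2*t ≤ n →
    S (sigmaP n t) = Ft (show 0 < n by omega) t * Gt n t
  | 0, ht => by
    rw [show sigmaP n 0 = Fin.revPerm from rfl, hS.1, Ft, Gt]
    rw [show (Finset.univ.filter fun k : Fin n => 2*0 ≤ (k:ℕ)) = Finset.univ from
      Finset.filter_true_of_mem (by intros; omega)]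
    simp
  | t+1, ht => by
    have h0 : 0 < n := by omega
    have h : 2*t+1 < n := by omega
    have h2t : 2*t < n := by omega
    have IH := schubert_M n hn S hS t (by omega)
    -- descent
    have hdesc : sigmaP n t ⟨2*t+1, h⟩ < sigmaP n t ⟨2*t, Nat.lt_of_succ_lt h⟩ := by
      rw [Fin.lt_def, sigmaP_apply n t (by omega), sigmaP_apply n t (by omega)]
      simp only
      split_ifs <;> omega
    have hrec := hS.2 (sigmaP n t) (2*t) h hdesc
    set i : Fin n := ⟨2*t, Nat.lt_of_succ_lt h⟩ with hidef
    set j : Fin n := ⟨2*t+1, h⟩ with hjdef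
    have hvi : (i:ℕ) = 2*t := rfl
    have hvj : (j:ℕ) = 2*t+1 := rfl
    have hij : i ≠ j := Fin.ne_of_val_ne (by omega)
    set p : ℕ := n - 2 - 2*t with hp
    -- split Gt
    have e1 : (Finset.univ.filter fun k : Fin n => 2*t ≤ (k:ℕ)) =
        insert i (insert j (Finset.univ.filter fun k : Fin n => 2*(t+1) ≤ (k:ℕ))) := by
      ext k
      simp only [Finset.mem_filter, Finset.mem_univ, true_and, Finset.mem_insert,
        Fin.ext_iff, hvi, hvj]
      have := k.isLt
      omega
    have hjnot : j ∉ (Finset.univ.filter fun k : Fin n => 2*(t+1) ≤ (k:ℕ)) := by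
      simp only [Finset.mem_filter, Finset.mem_univ, true_and, hvj]
      omega
    have hinot : i ∉ insert j (Finset.univ.filter fun k : Fin n => 2*(t+1) ≤ (k:ℕ)) := by
      simp only [Finset.mem_insert, Finset.mem_filter, Finset.mem_univ, true_and,
        Fin.ext_iff, hvi, hvj]
      omega
    have hGsplit : Gt n t = X i ^ (p+1) * (X j ^ p * Gt n (t+1)) := by
      rw [Gt, Gt, e1, Finset.prod_insert hinot, Finset.prod_insert hjnot,
        show n - 1 - (i:ℕ) = p + 1 from by omega,
        show n - 1 - (j:ℕ) = p from by omega]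
    -- split Ft
    have hFsplit : Ft h0 (t+1) = Ft h0 t * (X i * X j)^p := by
      rw [Ft, Finset.prod_range_succ, ← Ft, idxF_eq h0 h2t, idxF_eq h0 h,
        show n - 2*t - 2 = p by omega]
    -- rename fixes Ft and Gt (t+1)
    have hrenF : rename (Equiv.swap i j) (Ft h0 t) = Ft h0 t := by
      rw [Ft, map_prod]
      refine Finset.prod_congr rfl fun s hs => ?_
      rw [Finset.mem_range] at hs
      have hs1 : 2*s < n := by omega
      have hs2 : 2*s+1 < n := by omega
      have n1 : idxF h0 (2*s) ≠ i := by
        rw [idxF_eq h0 hs1 hs1]; exact Fin.ne_of_val_ne (show 2*s ≠ 2*t by omega)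
      have n1' : idxF h0 (2*s) ≠ j := by
        rw [idxF_eq h0 hs1 hs1]; exact Fin.ne_of_val_ne (show 2*s ≠ 2*t+1 by omega)
      have n2 : idxF h0 (2*s+1) ≠ i := by
        rw [idxF_eq h0 hs2 hs2]; exact Fin.ne_of_val_ne (show 2*s+1 ≠ 2*t by omega)
      have n2' : idxF h0 (2*s+1) ≠ j := by
        rw [idxF_eq h0 hs2 hs2]; exact Fin.ne_of_val_ne (show 2*s+1 ≠ 2*t+1 by omega)
      rw [map_pow, map_mul, rename_X, rename_X, Equiv.swap_apply_of_ne_of_ne n1 n1',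
        Equiv.swap_apply_of_ne_of_ne n2 n2']
    have hrenG : rename (Equiv.swap i j) (Gt n (t+1)) = Gt n (t+1) := by
      rw [Gt, map_prod]
      refine Finset.prod_congr rfl fun k hk => ?_
      rw [Finset.mem_filter] at hk
      have hk2 := hk.2
      rw [map_pow, rename_X,
        Equiv.swap_apply_of_ne_of_ne
          (Fin.ne_of_val_ne (show (k:ℕ) ≠ 2*t by omega))
          (Fin.ne_of_val_ne (show (k:ℕ) ≠ 2*t+1 by omega))]
    -- key algebraic identity
    have key : S (sigmaP n t) - rename (Equiv.swap i j) (S (sigmaP n t)) =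
        (X i - X j) * (Ft h0 (t+1) * Gt n (t+1)) := by
      rw [IH, map_mul, hrenF, hGsplit, map_mul, map_mul, map_pow, map_pow, rename_X,
        rename_X, Equiv.swap_apply_left, Equiv.swap_apply_right, hrenG, hFsplit]
      ring
    have hcan := hrec.trans key
    have hres := mul_left_cancel₀ (X_sub_X_ne_zero hij) hcan
    rw [show sigmaP n (t+1) = sigmaP n t * Equiv.swap i j by
      simp [sigmaP, dif_pos h]; rfl]
    exact hres

/-- For `n ≥ 2`, the Schubert polynomial of `w̃_0(n) ∈ S_n` is the monomial
`𝔖_{w̃_0(n)} = ∏_{t ≥ 1, 2t ≤ n} (x_{2t-1} x_{2t})^{n-2t}` (variables 1-indexed; below the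
variables `x_{2t-1}, x_{2t}` are the 0-indexed variables `X (2t-2), X (2t-1)`);
consequently `Φ_{w̃_0(n)} = 1`. -/
theorem stmt19 (n : ℕ) (hn : 2 ≤ n)
    (S : Equiv.Perm (Fin n) → MvPolynomial (Fin n) ℤ) (hS : IsSchubertFamily S)
    (w : Equiv.Perm (Fin n)) (hw : ∀ j : Fin n, (w j : ℕ) = wk0fun 2 n j) :
    S w = ∏ t ∈ (Finset.Icc 1 (n / 2)).attach,
        (X (⟨2 * t.1 - 2, by have := Finset.mem_Icc.mp t.2; omega⟩ : Fin n) *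
          X (⟨2 * t.1 - 1, by have := Finset.mem_Icc.mp t.2; omega⟩ : Fin n)) ^ (n - 2 * t.1) ∧
      Phi (S w) = 1 := by
  have h0 : 0 < n := by omega
  have hweq : w = sigmaP n (n/2) := by
    apply Equiv.ext; intro j
    apply Fin.ext
    rw [hw j, sigmaP_apply n (n/2) (by omega) j, wk0fun]
    have := j.isLt
    split_ifs <;> omega
  have hSM := schubert_M n hn S hS (n/2) (by omega)
  have hG1 : Gt n (n/2) = 1 := by
    rw [Gt]
    apply Finset.prod_eq_one
    intro k hk
    rw [Finset.mem_filter] at hk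
    have h1 := hk.2
    have := k.isLt
    rw [show n - 1 - (k:ℕ) = 0 from by omega, pow_zero]
  have hfinal : S w = ∏ t ∈ (Finset.Icc 1 (n/2)).attach,
      (X (idxF h0 (2*t.1-2)) * X (idxF h0 (2*t.1-1)))^(n-2*t.1) := by
    rw [hweq, hSM, hG1, mul_one, Ft,
      Finset.prod_attach (Finset.Icc 1 (n/2))
        (fun m => (X (idxF h0 (2*m-2)) * X (idxF h0 (2*m-1)))^(n-2*m))]
    rw [show Finset.Icc 1 (n/2) = Finset.image (fun s => s + 1) (Finset.range (n/2)) from by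
        ext x
        simp only [Finset.mem_image, Finset.mem_range, Finset.mem_Icc]
        constructor
        · rintro ⟨h1, h2⟩; exact ⟨x-1, by omega, by omega⟩
        · rintro ⟨s, hs, rfl⟩; omega,
      Finset.prod_image (by intros x _ y _ hxy; simp only at hxy; omega)]
    refine Finset.prod_congr rfl fun s hs => ?_
    rw [Finset.mem_range] at hs
    rw [show 2*(s+1)-2 = 2*s from by omega, show 2*(s+1)-1 = 2*s+1 from by omega,
      show n-2*(s+1) = n-2*s-2 from by omega]
  constructor
  · refine hfinal.trans (Finset.prod_congr rfl fun t _ => ?_)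
    have ht := Finset.mem_Icc.mp t.2
    rw [idxF_eq h0 (show 2*t.1-2 < n by omega) (show 2*t.1-2 < n by omega),
      idxF_eq h0 (show 2*t.1-1 < n by omega) (show 2*t.1-1 < n by omega)]
  · rw [hfinal, Phi, map_prod, Finset.abs_prod]
    refine Finset.prod_eq_one fun t _ => ?_
    simp [abs_pow, abs_mul]
end
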